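/- arXiv:2003.13128 — 7 statements merged into one kernel-verified Lean document; each statement's English description precedes it below -/
import Mathlib

section
/- Let X = ∏_{i∈V} A_i be a finite product of nonempty sets and f : X → ℝ. If f is separable with respect to hypergraphs H1 and H2 on V, then f is separable with respect to the intersection hypergraph H1 ⊓ H2, whose hyperlinks are all sets J1 ∩ J2 with J1 a hyperlink of H1 and J2 a hyperlink of H2. -/
/-!
Anchor at a base point `z`: for `S ⊆ V` let `f_S x` be the alternating sum, over `T ⊆ S`, of
`f` evaluated at `x` on `T` and at `z` off `T`. By Möbius inversion on the subset lattice
`f = ∑_S f_S`; moreover `f_S` depends only on `x_S`, and `f ↦ f_S` is additive. If `f` depends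
only on `x_J` and `a ∈ S \ J`, the terms for `T` and `insert a T` cancel, so `f_S = 0`; hence
for `L`-separable `f` only the components with `S` inside a hyperlink of `L` survive.
Separability with respect to `L1` and `L2` thus leaves only `S ⊆ J1 ∩ J2`, and grouping the
surviving components by such a hyperlink gives a decomposition along `L1 ⊓ L2`.
-/

/-- `f : ∏ i, A i → ℝ` is separable with respect to the hypergraph with hyperlink set `L`
if `f = Σ_{J ∈ L} f_J` where each `f_J` depends only on the coordinates in `J`. -/
def SepFun {V : Type*} {A : V → Type*} (f : (∀ i, A i) → ℝ) (L : Finset (Finset V)) : Prop :=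
  ∃ g : Finset V → (∀ i, A i) → ℝ,
    (∀ J ∈ L, ∀ x y : ∀ i, A i, (∀ i ∈ J, x i = y i) → g J x = g J y) ∧
    ∀ x, f x = ∑ J ∈ L, g J x

open Finset

section PowersetMoebius

variable {ι M : Type*} [AddCommGroup M]

-- `(-1) ^ (#S + #T) = (-1) ^ #(S \ T)` for `T ⊆ S`, without truncated subtraction.
def powersetMoebius (F : Finset ι → M) (S : Finset ι) : M :=
  ∑ T ∈ S.powerset, (-1 : ℤ) ^ (#S + #T) • F T

lemma powersetMoebius_sum {κ : Type*} (s : Finset κ) (F : κ → Finset ι → M) (S : Finset ι) :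
    powersetMoebius (fun T => ∑ k ∈ s, F k T) S = ∑ k ∈ s, powersetMoebius (F k) S := by
  simp only [powersetMoebius, smul_sum]
  exact sum_comm

variable [DecidableEq ι]

lemma powersetMoebius_insert (F : Finset ι → M) {a : ι} {S : Finset ι} (ha : a ∉ S) :
    powersetMoebius F (insert a S) =
      powersetMoebius (fun T => F (insert a T)) S - powersetMoebius F S := by
  have haT : ∀ T ∈ S.powerset, a ∉ T := fun T hT haT => ha (mem_powerset.1 hT haT)
  simp only [powersetMoebius, sum_powerset_insert ha, card_insert_of_notMem ha]
  rw [add_comm, sub_eq_add_neg, ← sum_neg_distrib]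
  congr 1 <;> refine sum_congr rfl fun T hT => ?_
  · rw [card_insert_of_notMem (haT T hT)]
    congr 1
    ring
  · rw [← neg_smul]
    congr 1
    ring

lemma powersetMoebius_eq_zero_of_insert_eq {F : Finset ι → M} {S : Finset ι} {a : ι}
    (ha : a ∈ S) (hF : ∀ T, F (insert a T) = F T) : powersetMoebius F S = 0 := by
  rw [← insert_erase ha, powersetMoebius_insert F (notMem_erase a S)]
  simp only [hF, sub_self]

lemma sum_powerset_powersetMoebius (F : Finset ι → M) (U : Finset ι) :
    ∑ S ∈ U.powerset, powersetMoebius F S = F U := by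
  induction U using Finset.induction_on generalizing F with
  | empty => simp [powersetMoebius]
  | insert a U ha ih =>
    rw [sum_powerset_insert ha, sum_congr rfl fun S hS =>
      powersetMoebius_insert F fun haS => ha (mem_powerset.1 hS haS), sum_sub_distrib, ih, ih]
    abel

end PowersetMoebius

section AnchoredComponent

variable {V : Type*} [DecidableEq V] {A : V → Type*} {β : Type*} [AddCommGroup β]

def anchoredComponent (z : ∀ i, A i) (f : (∀ i, A i) → β) (S : Finset V) (x : ∀ i, A i) : β :=
  powersetMoebius (fun T => f (T.piecewise x z)) S

lemma anchoredComponent_dependsOn (z : ∀ i, A i) (f : (∀ i, A i) → β) (S : Finset V) :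
    DependsOn (anchoredComponent z f S) S := by
  intro x y hxy
  refine sum_congr rfl fun T hT => ?_
  simp only [piecewise_congr (s := T) (fun i hi => hxy i (mem_powerset.1 hT hi)) fun _ _ => rfl]

lemma anchoredComponent_sum {κ : Type*} (z : ∀ i, A i) (s : Finset κ)
    (g : κ → (∀ i, A i) → β) (S : Finset V) (x : ∀ i, A i) :
    anchoredComponent z (fun y => ∑ k ∈ s, g k y) S x = ∑ k ∈ s, anchoredComponent z (g k) S x :=
  powersetMoebius_sum s _ S

lemma anchoredComponent_eq_zero_of_dependsOn (z : ∀ i, A i) {f : (∀ i, A i) → β}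
    {J S : Finset V} (hf : DependsOn f J) (hSJ : ¬ S ⊆ J) (x : ∀ i, A i) :
    anchoredComponent z f S x = 0 := by
  obtain ⟨a, haS, haJ⟩ := not_subset.1 hSJ
  refine powersetMoebius_eq_zero_of_insert_eq haS fun T => hf fun i hi => ?_
  exact piecewise_insert_of_ne _ _ _ fun hia : i = a => haJ (hia ▸ hi)

lemma sum_anchoredComponent [Fintype V] (z : ∀ i, A i) (f : (∀ i, A i) → β) (x : ∀ i, A i) :
    ∑ S, anchoredComponent z f S x = f x := by
  rw [← powerset_univ]
  exact (sum_powerset_powersetMoebius _ _).trans (by rw [piecewise_univ])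

end AnchoredComponent

section SepFun

variable {V : Type*} {A : V → Type*} {L : Finset (Finset V)}

lemma sepFun_zero : SepFun (0 : (∀ i, A i) → ℝ) L :=
  ⟨0, fun _ _ _ _ _ => rfl, fun _ => by simp⟩

lemma SepFun.add {f g : (∀ i, A i) → ℝ} (hf : SepFun f L) (hg : SepFun g L) :
    SepFun (f + g) L := by
  obtain ⟨F, hF_dep, hF⟩ := hf
  obtain ⟨G, hG_dep, hG⟩ := hg
  refine ⟨F + G, fun J hJ x y hxy => ?_, fun x => ?_⟩
  · simp only [Pi.add_apply, hF_dep J hJ x y hxy, hG_dep J hJ x y hxy]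
  · simp only [Pi.add_apply, hF, hG, sum_add_distrib]

lemma SepFun.sum {κ : Type*} (s : Finset κ) {f : κ → (∀ i, A i) → ℝ}
    (hf : ∀ k ∈ s, SepFun (f k) L) : SepFun (∑ k ∈ s, f k) L :=
  sum_induction _ (SepFun · L) (fun _ _ => SepFun.add) sepFun_zero hf

lemma DependsOn.sepFun [DecidableEq V] {f : (∀ i, A i) → ℝ} {J : Finset V}
    (hf : DependsOn f J) (hJ : J ∈ L) : SepFun f L := by
  refine ⟨fun K x => if K = J then f x else 0, fun K _ x y hxy => ?_, fun x => by simp [hJ]⟩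
  dsimp only
  split_ifs with hKJ
  · exact hf fun i hi => hxy i (hKJ ▸ hi)
  · rfl

lemma SepFun.anchoredComponent_eq_zero [DecidableEq V] (z : ∀ i, A i) {f : (∀ i, A i) → ℝ}
    (hf : SepFun f L) {S : Finset V} (hS : ∀ J ∈ L, ¬ S ⊆ J) (x : ∀ i, A i) :
    anchoredComponent z f S x = 0 := by
  obtain ⟨g, hg_dep, hg⟩ := hf
  rw [show f = fun y => ∑ J ∈ L, g J y from funext hg, anchoredComponent_sum]
  exact sum_eq_zero fun J hJ =>
    anchoredComponent_eq_zero_of_dependsOn z (fun x y => hg_dep J hJ x y) (hS J hJ) x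

lemma sepFun_of_anchoredComponent_eq_zero [Fintype V] [DecidableEq V] (z : ∀ i, A i)
    {f : (∀ i, A i) → ℝ} (hf : ∀ S, (∀ J ∈ L, ¬ S ⊆ J) → ∀ x, anchoredComponent z f S x = 0) :
    SepFun f L := by
  have hdecomp : f = ∑ S with ∃ J ∈ L, S ⊆ J, anchoredComponent z f S := by
    funext x
    rw [Finset.sum_apply, sum_filter_of_ne, sum_anchoredComponent]
    intro S _ hS
    by_contra hS_uncovered
    exact hS (hf S (by simpa only [not_exists, not_and] using hS_uncovered) x)
  rw [hdecomp]
  refine SepFun.sum _ fun S hS => ?_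
  obtain ⟨J, hJ, hSJ⟩ := (mem_filter.1 hS).2
  exact ((anchoredComponent_dependsOn z f S).mono (coe_subset.2 hSJ)).sepFun hJ

end SepFun

/-- If `f` is separable w.r.t. `H1` and w.r.t. `H2`, then it is separable w.r.t. the
intersection hypergraph `H1 ⊓ H2`, whose hyperlinks are the sets `J1 ∩ J2` with
`J1 ∈ L1` and `J2 ∈ L2`. -/
theorem sepFun_inter {V : Type*} [Fintype V] [DecidableEq V]
    {A : V → Type*} [∀ i, Nonempty (A i)]
    (f : (∀ i, A i) → ℝ) (L1 L2 : Finset (Finset V))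
    (h1 : SepFun f L1) (h2 : SepFun f L2) :
    SepFun f ((L1 ×ˢ L2).image (fun p => p.1 ∩ p.2)) := by
  refine sepFun_of_anchoredComponent_eq_zero (fun i => Classical.arbitrary (A i)) fun S hS => ?_
  by_cases hS₁ : ∃ J₁ ∈ L1, S ⊆ J₁
  · obtain ⟨J₁, hJ₁, hSJ₁⟩ := hS₁
    refine h2.anchoredComponent_eq_zero _ fun J₂ hJ₂ hSJ₂ => hS _ ?_ (subset_inter hSJ₁ hSJ₂)
    exact mem_image_of_mem _ (mem_product.2 ⟨hJ₁, hJ₂⟩ : (J₁, J₂) ∈ L1 ×ˢ L2)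
  · simp only [not_exists, not_and] at hS₁
    exact h1.anchoredComponent_eq_zero _ hS₁
end

section
/- Every function f : X → ℝ on a finite product X = ∏_{i∈V} A_i of nonempty sets admits a unique minimal hypergraph H_f: a simple hypergraph with respect to which f is separable and which is a sub-H-graph of every hypergraph with respect to which f is separable. -/
def SubH {V : Type*} (L1 L2 : Finset (Finset V)) : Prop :=
  ∀ J ∈ L1, ∃ K ∈ L2, J ⊆ K

def IsSimpleH {V : Type*} (L : Finset (Finset V)) : Prop :=
  ∀ J ∈ L, ∀ K ∈ L, J ⊆ K → J = K

/-!
Fix a base point `z`. Möbius inversion over the subsets of `V` writes `f = ∑ S, f_S` with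
`f_S x = ∑ T ⊆ S, (-1) ^ #(S \ T) * f (x on T, z off T)`, and `f_S` depends only on `x` on `S`.
If `f = ∑ J ∈ M, f_J` and `S` lies in no hyperlink of `M`, then `f_S = 0`: for each `J` pick
`a ∈ S \ J`; the terms of `T` and `insert a T` cancel in the alternating sum of `f_J`.
Hence every separating hypergraph covers the support `{S | f_S ≠ 0}`, and the maximal elements
of the support form the minimal hypergraph. On simple hypergraphs `⪯` is antisymmetric,
which gives uniqueness.
-/

open Finset

section AlternatingSum

variable {V G : Type*} [AddCommGroup G]

/-- For `T ⊆ S`, `(-1) ^ (#S + #T) = (-1) ^ #(S \ T)` is the Möbius function of the Boolean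
lattice. -/
def altSum (h : Finset V → G) (S : Finset V) : G :=
  ∑ T ∈ S.powerset, (-1 : ℤ) ^ (#S + #T) • h T

lemma altSum_congr {h₁ h₂ : Finset V → G} {S : Finset V} (h : ∀ T ⊆ S, h₁ T = h₂ T) :
    altSum h₁ S = altSum h₂ S :=
  sum_congr rfl fun T hT => by rw [h T (mem_powerset.1 hT)]

lemma altSum_sum {ι : Type*} (s : Finset ι) (h : ι → Finset V → G) (S : Finset V) :
    altSum (fun T => ∑ k ∈ s, h k T) S = ∑ k ∈ s, altSum (h k) S := by
  simp only [altSum, smul_sum]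
  exact sum_comm

variable [DecidableEq V]

lemma altSum_insert {a : V} {S : Finset V} (ha : a ∉ S) (h : Finset V → G) :
    altSum h (insert a S) = altSum (fun T => h (insert a T)) S - altSum h S := by
  rw [altSum, sum_powerset_insert ha, add_comm, sub_eq_add_neg, altSum, altSum, ← sum_neg_distrib]
  congr 1 <;> refine sum_congr rfl fun T hT => ?_
  · have haT : a ∉ T := fun h => ha (mem_powerset.1 hT h)
    rw [card_insert_of_notMem ha, card_insert_of_notMem haT, show #S + 1 + (#T + 1) = #S + #T + 2 by
      ring, pow_add, neg_one_sq, mul_one]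
  · rw [card_insert_of_notMem ha, show #S + 1 + #T = #S + #T + 1 by ring, pow_succ, mul_neg_one,
      neg_smul]

lemma sum_powerset_altSum (h : Finset V → G) (U : Finset V) :
    ∑ S ∈ U.powerset, altSum h S = h U := by
  induction U using Finset.induction_on generalizing h with
  | empty => simp [altSum]
  | insert a U ha ih =>
    rw [sum_powerset_insert ha, sum_congr rfl fun S hS =>
      altSum_insert (fun h => ha (mem_powerset.1 hS h)) h, sum_sub_distrib, add_sub_cancel, ih]

lemma altSum_eq_zero_of_insert_eq {h : Finset V → G} {S : Finset V} {a : V} (haS : a ∈ S)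
    (h_insert : ∀ T, h (insert a T) = h T) : altSum h S = 0 := by
  rw [← insert_erase haS, altSum_insert (notMem_erase a S), funext h_insert, sub_self]

end AlternatingSum

section Decomposition

variable {V : Type*} [DecidableEq V] {A : V → Type*}

def mobiusComponent (f : (∀ i, A i) → ℝ) (z : ∀ i, A i) (S : Finset V) (x : ∀ i, A i) : ℝ :=
  altSum (fun T => f (T.piecewise x z)) S

lemma mobiusComponent_congr (f : (∀ i, A i) → ℝ) (z : ∀ i, A i) {S : Finset V}
    {x y : ∀ i, A i} (hxy : ∀ i ∈ S, x i = y i) :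
    mobiusComponent f z S x = mobiusComponent f z S y :=
  altSum_congr fun T hT => by
    rw [T.piecewise_congr (fun i hi => hxy i (hT hi)) fun _ _ => rfl]

lemma sum_mobiusComponent [Fintype V] (f : (∀ i, A i) → ℝ) (z x : ∀ i, A i) :
    ∑ S, mobiusComponent f z S x = f x := by
  simp only [mobiusComponent]
  rw [← powerset_univ, sum_powerset_altSum, piecewise_univ]

lemma mobiusComponent_eq_zero {f : (∀ i, A i) → ℝ} {M : Finset (Finset V)} (hM : SepFun f M)
    (z : ∀ i, A i) {S : Finset V} (hS : ∀ K ∈ M, ¬S ⊆ K) (x : ∀ i, A i) :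
    mobiusComponent f z S x = 0 := by
  obtain ⟨g, hg, hf⟩ := hM
  simp only [mobiusComponent, hf, altSum_sum]
  refine sum_eq_zero fun K hK => ?_
  obtain ⟨a, haS, haK⟩ := not_subset.1 (hS K hK)
  refine altSum_eq_zero_of_insert_eq haS fun T => hg K hK _ _ fun i hi => ?_
  exact T.piecewise_insert_of_ne x z (ne_of_mem_of_not_mem hi haK)

variable [Fintype V]

open Classical in
noncomputable def mobiusSupport (f : (∀ i, A i) → ℝ) (z : ∀ i, A i) : Finset (Finset V) :=
  {S | ∃ x, mobiusComponent f z S x ≠ 0}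

lemma sepFun_mobiusSupport (f : (∀ i, A i) → ℝ) (z : ∀ i, A i) :
    SepFun f (mobiusSupport f z) := by
  refine ⟨mobiusComponent f z, fun S _ _ _ => mobiusComponent_congr f z, fun x => ?_⟩
  rw [← sum_mobiusComponent f z x]
  refine (sum_subset (subset_univ _) fun S _ hS => ?_).symm
  have hS_zero : ∀ y, mobiusComponent f z S y = 0 := by simpa [mobiusSupport] using hS
  exact hS_zero x

lemma subH_mobiusSupport {f : (∀ i, A i) → ℝ} {M : Finset (Finset V)} (hM : SepFun f M)
    (z : ∀ i, A i) : SubH (mobiusSupport f z) M := by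
  intro S hS
  by_contra! hS_uncovered
  obtain ⟨x, hx⟩ : ∃ x, mobiusComponent f z S x ≠ 0 := by simpa [mobiusSupport] using hS
  exact hx (mobiusComponent_eq_zero hM z hS_uncovered x)

end Decomposition

section Hypergraph

variable {V : Type*} {L M : Finset (Finset V)}

lemma SepFun.mono {A : V → Type*} {f : (∀ i, A i) → ℝ} (hM : SepFun f M) (hML : SubH M L) :
    SepFun f L := by
  classical
  obtain ⟨g, hg, hf⟩ := hM
  choose! c hcL hc using hML
  refine ⟨fun K x => ∑ J ∈ M with c J = K, g J x, fun K _ x y hxy => sum_congr rfl fun J hJ => ?_,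
    fun x => ?_⟩
  · obtain ⟨hJM, rfl⟩ := mem_filter.1 hJ
    exact hg J hJM x y fun i hi => hxy i (hc J hJM hi)
  · rw [hf, sum_fiberwise_of_maps_to hcL]

lemma IsSimpleH.subset_of_subH (hL : IsSimpleH L) (hLM : SubH L M) (hML : SubH M L) : L ⊆ M := by
  intro J hJ
  obtain ⟨K, hK, hJK⟩ := hLM J hJ
  obtain ⟨J', hJ', hKJ'⟩ := hML K hK
  obtain rfl := hL J hJ J' hJ' (hJK.trans hKJ')
  rwa [hJK.antisymm hKJ']

lemma IsSimpleH.eq_of_subH (hL : IsSimpleH L) (hM : IsSimpleH M) (hLM : SubH L M)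
    (hML : SubH M L) : L = M :=
  (hL.subset_of_subH hLM hML).antisymm (hM.subset_of_subH hML hLM)

lemma exists_isSimpleH_subset_subH (D : Finset (Finset V)) :
    ∃ L ⊆ D, IsSimpleH L ∧ SubH D L := by
  classical
  refine ⟨{J ∈ D | Maximal (· ∈ D) J}, filter_subset _ _,
    fun J hJ K hK hJK => (mem_filter.1 hJ).2.eq_of_le (mem_filter.1 hK).1 hJK, fun J hJ => ?_⟩
  obtain ⟨K, hJK, hK⟩ := D.exists_le_maximal hJ
  exact ⟨K, mem_filter.2 ⟨hK.1, hK⟩, hJK⟩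

end Hypergraph

theorem exists_unique_minimal_hgraph_general {V : Type*} [Fintype V]
    {A : V → Type*} [∀ i, Nonempty (A i)] (f : (∀ i, A i) → ℝ) :
    ∃! L : Finset (Finset V),
      IsSimpleH L ∧ SepFun f L ∧ ∀ M : Finset (Finset V), SepFun f M → SubH L M := by
  classical
  obtain ⟨z⟩ : Nonempty (∀ i, A i) := inferInstance
  obtain ⟨L, hLD, hL, hDL⟩ := exists_isSimpleH_subset_subH (mobiusSupport f z)
  have hsep : SepFun f L := (sepFun_mobiusSupport f z).mono hDL
  have hmin : ∀ M, SepFun f M → SubH L M :=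
    fun M hM J hJ => subH_mobiusSupport hM z J (hLD hJ)
  refine ⟨L, ⟨hL, hsep, hmin⟩, fun L' ⟨hL', hsep', hmin'⟩ => ?_⟩
  exact hL'.eq_of_subH hL (hmin' L hsep) (hmin L' hsep')

/-- Every function on a finite product of nonempty sets admits a unique minimal
hypergraph: a simple hypergraph w.r.t. which it is separable and which is a
sub-H-graph of every hypergraph w.r.t. which it is separable. -/
theorem exists_unique_minimal_hgraph {V : Type*} [Fintype V] [DecidableEq V]
    {A : V → Type*} [∀ i, Nonempty (A i)] (f : (∀ i, A i) → ℝ) :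
    ∃! L : Finset (Finset V),
      IsSimpleH L ∧ SepFun f L ∧ ∀ M : Finset (Finset V), SepFun f M → SubH L M :=
  exists_unique_minimal_hgraph_general f
end

section
/- If a game u is separable with respect to two FDH-graphs F1 and F2, then u is separable with respect to their intersection F1 ⊓ F2, whose hyperlinks with tail i are all sets J1 ∩ J2 where (i, J1) is a hyperlink of F1 and (i, J2) is a hyperlink of F2. -/
/-- A game `u` (utilities indexed by players) is separable with respect to the FDH-graph
with hyperlink set `D`: for each player `i`,
`u i x = Σ_{(i,J) ∈ D} u_i^J(x_i, x_J) + n_i(x_{-i})`, where `u_i^J` depends only on the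
coordinates in `{i} ∪ J` and `n_i` does not depend on the coordinate `i`. -/
def GameSep {V : Type*} [DecidableEq V] {A : V → Type*}
    (u : V → (∀ i, A i) → ℝ) (D : Finset (V × Finset V)) : Prop :=
  ∀ i : V, ∃ (v : Finset V → (∀ j, A j) → ℝ) (n : (∀ j, A j) → ℝ),
    (∀ J, (i, J) ∈ D → ∀ x y : ∀ j, A j,
      (∀ j ∈ insert i J, x j = y j) → v J x = v J y) ∧
    (∀ x y : ∀ j, A j, (∀ j, j ≠ i → x j = y j) → n x = n y) ∧
    ∀ x, u i x = (∑ p ∈ D.filter (fun p => p.1 = i), v p.2 x) + n x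

/-- The intersection of two FDH-graphs: hyperlinks with tail `i` are the sets `J1 ∩ J2`
for hyperlinks `(i, J1)` of the first and `(i, J2)` of the second. -/
def interF {V : Type*} [DecidableEq V] (D1 D2 : Finset (V × Finset V)) :
    Finset (V × Finset V) :=
  ((D1 ×ˢ D2).filter (fun q => q.1.1 = q.2.1)).image (fun q => (q.1.1, q.1.2 ∩ q.2.2))

/-!
Fix a base profile `x₀`. Every `f : (∀ j, A j) → M` is the sum over all `S` of its Möbius
interaction terms `interaction x₀ f S`, the term on `S` depending only on the coordinates in `S`,
and the term on `S` vanishes as soon as `f` is a sum of functions each of which ignores some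
coordinate of `S`. Hence `f` splits into pieces depending on prescribed blocks exactly when its
interaction terms vanish on every `S` contained in no block. For `u i` and an FDH-graph `D` the
blocks are the sets `{i} ∪ J` together with `V \ {i}`, so separability says that the interaction
terms of `u i` vanish on every `S ∋ i` contained in no `{i} ∪ J`. A set contained in both
`{i} ∪ J1` and `{i} ∪ J2` is contained in `{i} ∪ (J1 ∩ J2)`.
-/

open Finset

section DependsOn

variable {V : Type*} {A : V → Type*} {M : Type*}

theorem DependsOn.add [Add M] {f g : (∀ j, A j) → M} {s : Set V} (hf : DependsOn f s)
    (hg : DependsOn g s) : DependsOn (f + g) s :=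
  fun _ _ h ↦ by simp only [Pi.add_apply, hf h, hg h]

theorem dependsOn_comp_piecewise [DecidableEq V] (x₀ : ∀ j, A j) (f : (∀ j, A j) → M)
    (U : Finset V) : DependsOn (fun x ↦ f (U.piecewise x x₀)) U :=
  fun _ _ h ↦ congrArg f (U.piecewise_congr h fun _ _ ↦ rfl)

theorem exists_regroup_of_dependsOn [AddCommMonoid M] {κ ι : Type*} [DecidableEq κ]
    [DecidableEq ι] (𝒮 : Finset κ) (F : κ → (∀ j, A j) → M) (s : Finset ι) (B : ι → Set V)
    (hF : ∀ a ∈ 𝒮, F a ≠ 0 → ∃ k ∈ s, DependsOn (F a) (B k)) :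
    ∃ g : ι → (∀ j, A j) → M, (∀ k ∈ s, DependsOn (g k) (B k)) ∧
      ∑ a ∈ 𝒮, F a = ∑ k ∈ s, g k := by
  induction 𝒮 using Finset.induction_on with
  | empty => exact ⟨0, fun _ _ ↦ (dependsOn_const 0).mono (Set.empty_subset _), by simp⟩
  | @insert a 𝒮 ha ih =>
    obtain ⟨g, hg, hsum⟩ := ih fun b hb ↦ hF b (mem_insert_of_mem hb)
    rw [sum_insert ha, hsum]
    by_cases hFa : F a = 0
    · exact ⟨g, hg, by rw [hFa, zero_add]⟩
    obtain ⟨k, hk, hFk⟩ := hF a (mem_insert_self a 𝒮) hFa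
    refine ⟨g + Pi.single k (F a), fun k' hk' ↦ (hg k' hk').add ?_, ?_⟩
    · obtain rfl | hne := eq_or_ne k' k
      · simpa using hFk
      · rw [Pi.single_eq_of_ne hne]
        exact (dependsOn_const 0).mono (Set.empty_subset _)
    · simp only [Pi.add_apply]
      rw [sum_add_distrib, sum_pi_single' k (F a) s, if_pos hk, add_comm]

end DependsOn

section Interaction

variable {V : Type*} [DecidableEq V] {A : V → Type*} {M : Type*} [AddCommGroup M]

/-- The Möbius inverse of `U ↦ f (U.piecewise x x₀)` on the lattice of finsets. -/
def interaction (x₀ : ∀ j, A j) (f : (∀ j, A j) → M) (S : Finset V) (x : ∀ j, A j) : M :=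
  ∑ T ∈ S.powerset, (-1 : ℤ) ^ #(S \ T) • f (T.piecewise x x₀)

variable (x₀ : ∀ j, A j)

theorem dependsOn_interaction (f : (∀ j, A j) → M) (S : Finset V) :
    DependsOn (interaction x₀ f S) S :=
  fun _ _ h ↦ sum_congr rfl fun T hT ↦ congrArg _ <|
    dependsOn_comp_piecewise x₀ f T fun j hj ↦ h j (mem_powerset.1 hT hj)

theorem interaction_add (f g : (∀ j, A j) → M) (S : Finset V) :
    interaction x₀ (f + g) S = interaction x₀ f S + interaction x₀ g S := by
  funext x
  simp [interaction, smul_add, sum_add_distrib]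

theorem interaction_sum {ι : Type*} (s : Finset ι) (g : ι → (∀ j, A j) → M) (S : Finset V) :
    interaction x₀ (∑ k ∈ s, g k) S = ∑ k ∈ s, interaction x₀ (g k) S := by
  funext x
  simp only [interaction, Finset.sum_apply, smul_sum]
  exact sum_comm

theorem interaction_eq_zero_of_not_subset {f : (∀ j, A j) → M} {B S : Finset V}
    (hf : DependsOn f B) (hS : ¬ S ⊆ B) : interaction x₀ f S = 0 := by
  obtain ⟨j, hjS, hjB⟩ := not_subset.1 hS
  funext x
  -- pair `T` with `insert j T`: `f` does not see the coordinate `j`, and the signs are opposite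
  rw [interaction, ← insert_erase hjS, sum_powerset_insert (notMem_erase j S),
    ← sum_add_distrib]
  refine sum_eq_zero fun T hT ↦ ?_
  have hjT : j ∉ T := fun h ↦ notMem_erase j S (mem_powerset.1 hT h)
  have hf_insert : f ((insert j T).piecewise x x₀) = f (T.piecewise x x₀) :=
    hf fun k hk ↦ by simp [piecewise, ne_of_mem_of_not_mem hk hjB]
  have hj : j ∉ S.erase j \ T := fun h ↦ notMem_erase j S (mem_sdiff.1 h).1
  rw [hf_insert, insert_sdiff_of_notMem _ hjT, insert_sdiff_insert,
    sdiff_insert_of_notMem (notMem_erase j S), card_insert_of_notMem hj, pow_succ, mul_neg_one,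
    neg_smul, neg_add_cancel]

theorem sum_Icc_neg_one_pow_card_sdiff {T U : Finset V} (hTU : T ⊆ U) :
    ∑ S ∈ Icc T U, (-1 : ℤ) ^ #(S \ T) = if T = U then 1 else 0 := by
  have hcancel : ∀ R ∈ (U \ T).powerset, (T ∪ R) \ T = R := fun R hR ↦
    union_sdiff_cancel_left (disjoint_of_subset_right (mem_powerset.1 hR) disjoint_sdiff)
  rw [Icc_eq_image_powerset hTU, sum_image fun R₁ h₁ R₂ h₂ h ↦ by
      rw [← hcancel R₁ h₁, ← hcancel R₂ h₂, h],
    sum_congr rfl fun R hR ↦ by rw [hcancel R hR], sum_powerset_neg_one_pow_card]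
  simp only [sdiff_eq_empty_iff_subset, (show T ≤ U from hTU).ge_iff_eq]

theorem sum_powerset_interaction (f : (∀ j, A j) → M) (U : Finset V) :
    ∑ S ∈ U.powerset, interaction x₀ f S = fun x ↦ f (U.piecewise x x₀) := by
  funext x
  simp only [Finset.sum_apply, interaction]
  rw [sum_comm' (t' := U.powerset) (s' := fun T ↦ Icc T U) fun S T ↦ by
    simp only [mem_powerset, mem_Icc]
    exact ⟨fun ⟨hSU, hTS⟩ ↦ ⟨⟨hTS, hSU⟩, hTS.trans hSU⟩, fun ⟨⟨hTS, hSU⟩, _⟩ ↦ ⟨hSU, hTS⟩⟩]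
  simp_rw [← sum_smul]
  rw [sum_congr rfl fun T hT ↦ by rw [sum_Icc_neg_one_pow_card_sdiff (mem_powerset.1 hT)]]
  simp [ite_smul]

theorem sum_interaction [Fintype V] (f : (∀ j, A j) → M) : ∑ S, interaction x₀ f S = f := by
  rw [← powerset_univ, sum_powerset_interaction]
  simp

theorem interaction_eq_zero_of_eq_sum_add {ι : Type*} {f n : (∀ j, A j) → M} {s : Finset ι}
    {g : ι → (∀ j, A j) → M} {B : ι → Finset V} {C S : Finset V}
    (hg : ∀ k ∈ s, DependsOn (g k) (B k)) (hn : DependsOn n C) (hf : f = ∑ k ∈ s, g k + n)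
    (hSB : ∀ k ∈ s, ¬ S ⊆ B k) (hSC : ¬ S ⊆ C) : interaction x₀ f S = 0 := by
  rw [hf, interaction_add, interaction_sum, interaction_eq_zero_of_not_subset x₀ hn hSC,
    sum_eq_zero fun k hk ↦ interaction_eq_zero_of_not_subset x₀ (hg k hk) (hSB k hk), add_zero]

theorem exists_eq_sum_add_of_interaction_eq_zero [Fintype V] {ι : Type*} [DecidableEq ι]
    (f : (∀ j, A j) → M) (s : Finset ι) (B : ι → Finset V) (C : Finset V)
    (hf : ∀ S, (∀ k ∈ s, ¬ S ⊆ B k) → ¬ S ⊆ C → interaction x₀ f S = 0) :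
    ∃ (g : ι → (∀ j, A j) → M) (n : (∀ j, A j) → M),
      (∀ k ∈ s, DependsOn (g k) (B k)) ∧ DependsOn n C ∧ f = ∑ k ∈ s, g k + n := by
  obtain ⟨g, hg, hsum⟩ := exists_regroup_of_dependsOn {S | ¬ S ⊆ C} (interaction x₀ f) s
    (fun k ↦ B k) fun S hSC hS ↦ by
      by_contra! hSB
      refine hS (hf S (fun k hk hSk ↦ hSB k hk ?_) (mem_filter.1 hSC).2)
      exact (dependsOn_interaction x₀ f S).mono (coe_subset.2 hSk)
  refine ⟨g, fun x ↦ f (C.piecewise x x₀), hg, dependsOn_comp_piecewise x₀ f C, ?_⟩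
  have hpowerset : ({S | S ⊆ C} : Finset (Finset V)) = C.powerset := by ext; simp
  rw [← hsum, ← sum_powerset_interaction, ← hpowerset, sum_filter_not_add_sum_filter,
    sum_interaction]

end Interaction

theorem mk_inter_mem_interF {V : Type*} [DecidableEq V] {D1 D2 : Finset (V × Finset V)}
    {i : V} {J1 J2 : Finset V} (h1 : (i, J1) ∈ D1) (h2 : (i, J2) ∈ D2) :
    (i, J1 ∩ J2) ∈ interF D1 D2 :=
  mem_image.2 ⟨((i, J1), (i, J2)), mem_filter.2 ⟨mem_product.2 ⟨h1, h2⟩, rfl⟩, rfl⟩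

theorem gameSep_iff {V : Type*} [Fintype V] [DecidableEq V] {A : V → Type*}
    (x₀ : ∀ j, A j) (u : V → (∀ i, A i) → ℝ) (D : Finset (V × Finset V)) :
    GameSep u D ↔ ∀ i S, i ∈ S → (∀ J, (i, J) ∈ D → ¬ S ⊆ insert i J) →
      interaction x₀ (u i) S = 0 := by
  have hnot_subset_erase : ∀ {i : V} {S : Finset V}, ¬ S ⊆ univ.erase i ↔ i ∈ S := by
    simp [subset_erase]
  refine forall_congr' fun i ↦ ⟨?_, fun h ↦ ?_⟩
  · rintro ⟨v, n, hv, hn, hu⟩ S hiS hS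
    refine interaction_eq_zero_of_eq_sum_add x₀ (s := D.filter (·.1 = i))
      (g := fun p ↦ v p.2) (n := n) (B := fun p ↦ insert i p.2) (C := univ.erase i) ?_ ?_
      (funext fun x ↦ by simp [hu x]) ?_ (hnot_subset_erase.2 hiS)
    · rintro ⟨_, J⟩ hp
      obtain ⟨hpD, rfl⟩ := mem_filter.1 hp
      exact fun x y h ↦ hv J hpD x y h
    · exact fun x y h ↦ hn x y fun j hj ↦ h j (by simpa using hj)
    · rintro ⟨_, J⟩ hp
      obtain ⟨hpD, rfl⟩ := mem_filter.1 hp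
      exact hS J hpD
  · obtain ⟨g, n, hg, hn, hf⟩ := exists_eq_sum_add_of_interaction_eq_zero x₀ (u i)
      (D.filter (·.1 = i)) (fun p ↦ insert i p.2) (univ.erase i) fun S hSB hSC ↦
        h S (hnot_subset_erase.1 hSC) fun J hJ ↦ hSB (i, J) (mem_filter.2 ⟨hJ, rfl⟩)
    refine ⟨fun J ↦ g (i, J), n, fun J hJ x y h ↦ hg (i, J) (mem_filter.2 ⟨hJ, rfl⟩) h,
      fun x y h ↦ hn fun j hj ↦ h j (mem_erase.1 hj).1, fun x ↦ ?_⟩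
    rw [hf, Pi.add_apply, Finset.sum_apply]
    congr 1
    refine sum_congr rfl ?_
    rintro ⟨i', J⟩ hp
    obtain rfl : i' = i := (mem_filter.1 hp).2
    rfl

/-- If a game is separable w.r.t. two FDH-graphs, it is separable w.r.t. their
intersection. -/
theorem gameSep_inter {V : Type*} [Fintype V] [DecidableEq V]
    {A : V → Type*} [∀ i, Nonempty (A i)]
    (u : V → (∀ i, A i) → ℝ) (D1 D2 : Finset (V × Finset V))
    (h1 : GameSep u D1) (h2 : GameSep u D2) :
    GameSep u (interF D1 D2) := by
  have x₀ : ∀ j, A j := fun j ↦ Classical.arbitrary (A j)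
  rw [gameSep_iff x₀] at h1 h2 ⊢
  intro i S hiS hS
  by_contra hne
  obtain ⟨J1, hJ1, hSJ1⟩ : ∃ J, (i, J) ∈ D1 ∧ S ⊆ insert i J := by
    by_contra! hS1
    exact hne (h1 i S hiS hS1)
  obtain ⟨J2, hJ2, hSJ2⟩ : ∃ J, (i, J) ∈ D2 ∧ S ⊆ insert i J := by
    by_contra! hS2
    exact hne (h2 i S hiS hS2)
  refine hS _ (mk_inter_mem_interF hJ1 hJ2) ?_
  rw [insert_inter_distrib]
  exact subset_inter hSJ1 hSJ2
end

section
/- Every game u on a finite player set with a finite strategy space admits a unique minimal FDH-graph F_u: a simple FDH-graph with respect to which u is separable, and which is a sub-FDH-graph of every FDH-graph with respect to which u is separable. -/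
/-- `F1 ⪯ F2`: every hyperlink of `F1` has a hyperlink of `F2` with the same tail and a
larger head set. -/
def SubF {V : Type*} (D1 D2 : Finset (V × Finset V)) : Prop :=
  ∀ p ∈ D1, ∃ q ∈ D2, q.1 = p.1 ∧ p.2 ⊆ q.2

/-- An FDH-graph is simple if no hyperlink's head set is strictly contained in that of
another hyperlink with the same tail. -/
def IsSimpleF {V : Type*} (D : Finset (V × Finset V)) : Prop :=
  ∀ p ∈ D, ∀ q ∈ D, p.1 = q.1 → p.2 ⊆ q.2 → p = q

/-!
Fix a base point `a`. Möbius inversion over the subsets of the player set writes each payoff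
`u i` as the sum of its ANOVA components `anova a (u i) S`: the component on `S` depends only
on the coordinates in `S`, and it vanishes as soon as `u i` is a sum of terms none of which
depends on all of `S`. Hence, in any separation of `u`, every `S ∋ i` carrying a nonzero
component lies in `insert i J` for some hyperlink `(i, J)`. So the hyperlinks `(i, J)` with `J`
maximal among the sets for which the component on `insert i J` is nonzero form a simple
FDH-graph below every separating one; grouping the components of `u i` under these maximal
sets separates `u` with respect to it. Uniqueness holds because `⪯` is antisymmetric on simple
FDH-graphs.
-/

open Finset

section Moebius

variable {ι β : Type*} [DecidableEq ι] [AddCommGroup β]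

def moebius (g : Finset ι → β) (S : Finset ι) : β :=
  ∑ T ∈ S.powerset, (-1 : ℤ) ^ #(S \ T) • g T

lemma moebius_insert (g : Finset ι → β) {j : ι} {S : Finset ι} (hj : j ∉ S) :
    moebius g (insert j S) = moebius (fun T => g (insert j T)) S - moebius g S := by
  rw [moebius, sum_powerset_insert hj, moebius, moebius, add_comm, sub_eq_add_neg,
    ← sum_neg_distrib]
  congr 1
  · refine sum_congr rfl fun T _ => ?_
    rw [insert_sdiff_insert, sdiff_insert_of_notMem hj]
  · refine sum_congr rfl fun T hT => ?_
    have hjT : j ∉ T := fun h => hj (mem_powerset.1 hT h)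
    rw [insert_sdiff_of_notMem _ hjT, card_insert_of_notMem (fun h => hj (mem_sdiff.1 h).1),
      pow_succ, mul_neg_one, neg_smul]

lemma sum_powerset_moebius (g : Finset ι → β) (U : Finset ι) :
    ∑ S ∈ U.powerset, moebius g S = g U := by
  induction U using Finset.induction_on generalizing g with
  | empty => simp [moebius]
  | insert j U hj ih =>
    have hS : ∀ S ∈ U.powerset, j ∉ S := fun S hS h => hj (mem_powerset.1 hS h)
    rw [sum_powerset_insert hj, sum_congr rfl fun S h => moebius_insert g (hS S h),
      sum_sub_distrib, ih, ih]
    abel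

lemma moebius_eq_zero {g : Finset ι → β} {j : ι} {S : Finset ι} (hj : j ∈ S)
    (hg : ∀ T, g (insert j T) = g T) : moebius g S = 0 := by
  rw [← insert_erase hj, moebius_insert g (notMem_erase j S)]
  simp only [hg, sub_self]

lemma moebius_add (g h : Finset ι → β) (S : Finset ι) :
    moebius (fun T => g T + h T) S = moebius g S + moebius h S := by
  simp only [moebius, smul_add, sum_add_distrib]

lemma moebius_sum {κ : Type*} (s : Finset κ) (g : κ → Finset ι → β) (S : Finset ι) :
    moebius (fun T => ∑ p ∈ s, g p T) S = ∑ p ∈ s, moebius (g p) S := by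
  simp only [moebius, smul_sum]
  exact sum_comm

end Moebius

section Anova

variable {ι β : Type*} [DecidableEq ι] [AddCommGroup β] {A : ι → Type*}

def anova (a : ∀ i, A i) (f : (∀ i, A i) → β) (S : Finset ι) (x : ∀ i, A i) : β :=
  moebius (fun T => f (T.piecewise x a)) S

variable (a : ∀ i, A i)

lemma dependsOn_anova (f : (∀ i, A i) → β) (S : Finset ι) : DependsOn (anova a f S) S := by
  intro x y hxy
  refine sum_congr rfl fun T hT => ?_
  dsimp only
  rw [T.piecewise_congr (fun j hj => hxy j (mem_powerset.1 hT hj)) fun _ _ => rfl]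

lemma anova_eq_zero_of_dependsOn {f : (∀ i, A i) → β} {s : Set ι} (hf : DependsOn f s)
    {S : Finset ι} {j : ι} (hjS : j ∈ S) (hjs : j ∉ s) : anova a f S = 0 := by
  funext x
  refine moebius_eq_zero hjS fun T => hf fun k hk => ?_
  rw [piecewise_insert, Function.update_of_ne (ne_of_mem_of_not_mem hk hjs)]

lemma anova_add_sum {κ : Type*} (s : Finset κ) (g : κ → (∀ i, A i) → β) (h : (∀ i, A i) → β)
    (S : Finset ι) (x : ∀ i, A i) :
    anova a (fun y => ∑ p ∈ s, g p y + h y) S x = ∑ p ∈ s, anova a (g p) S x + anova a h S x := by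
  rw [anova, moebius_add, moebius_sum]
  rfl

lemma eq_sum_anova_insert_add_sum_anova [Fintype ι] (f : (∀ i, A i) → β) (i : ι)
    (x : ∀ i, A i) :
    f x = ∑ J ∈ (univ.erase i).powerset, anova a f (insert i J) x
      + ∑ S ∈ (univ.erase i).powerset, anova a f S x := by
  have h := sum_powerset_moebius (fun T => f (T.piecewise x a)) univ
  rw [piecewise_univ, ← insert_erase (mem_univ i), sum_powerset_insert (notMem_erase i _)] at h
  rw [← h, add_comm]
  rfl

end Anova

lemma IsSimpleF.subset_of_subF {V : Type*} {D E : Finset (V × Finset V)} (hD : IsSimpleF D)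
    (hDE : SubF D E) (hED : SubF E D) : D ⊆ E := by
  intro p hp
  obtain ⟨q, hq, hqp, hpq⟩ := hDE p hp
  obtain ⟨r, hr, hrq, hqr⟩ := hED q hq
  have hpr : p = r := hD p hp r hr (hrq.trans hqp).symm (hpq.trans hqr)
  have hqp' : q.2 ⊆ p.2 := hpr ▸ hqr
  rwa [Prod.ext hqp.symm (hpq.antisymm hqp')]

section MinimalFDH

variable {V : Type*} [DecidableEq V] {A : V → Type*} (a : ∀ i, A i)

lemma GameSep.anova_eq_zero {u : V → (∀ i, A i) → ℝ} {D : Finset (V × Finset V)}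
    (h : GameSep u D) {i : V} {S : Finset V} (hiS : i ∈ S)
    (hD : ∀ K, (i, K) ∈ D → ¬ S ⊆ insert i K) : anova a (u i) S = 0 := by
  obtain ⟨v, n, hv, hn, hu⟩ := h i
  funext x
  have hu' : u i = fun y => ∑ p ∈ D with p.1 = i, v p.2 y + n y := funext hu
  rw [hu', anova_add_sum, anova_eq_zero_of_dependsOn a (s := {i}ᶜ) (fun x y h => hn x y h) hiS
    (by simp), Pi.zero_apply, add_zero]
  refine sum_eq_zero fun p hp => ?_
  obtain ⟨hpD, rfl⟩ := mem_filter.1 hp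
  obtain ⟨j, hjS, hjK⟩ := not_subset.1 (hD p.2 hpD)
  rw [anova_eq_zero_of_dependsOn a (fun x y h => hv p.2 hpD x y h) hjS (by simpa using hjK),
    Pi.zero_apply]

variable (u : V → (∀ i, A i) → ℝ)

def IsInteraction (i : V) (J : Finset V) : Prop :=
  i ∉ J ∧ anova a (u i) (insert i J) ≠ 0

variable [Fintype V]

open scoped Classical in
noncomputable def minimalFDH : Finset (V × Finset V) :=
  {p | Maximal (IsInteraction a u p.1) p.2}

lemma mem_minimalFDH {p : V × Finset V} :
    p ∈ minimalFDH a u ↔ Maximal (IsInteraction a u p.1) p.2 := by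
  simp [minimalFDH]

lemma isSimpleF_minimalFDH : IsSimpleF (minimalFDH a u) := by
  intro p hp q hq hpq hsub
  rw [mem_minimalFDH] at hp hq
  exact Prod.ext hpq (hp.eq_of_le (hpq ▸ hq.prop) hsub)

lemma subF_minimalFDH {D : Finset (V × Finset V)} (h : GameSep u D) :
    SubF (minimalFDH a u) D := by
  rintro ⟨i, J⟩ hJ
  obtain ⟨hiJ, hne⟩ := ((mem_minimalFDH a u).1 hJ).prop
  by_contra! hD
  refine hne (h.anova_eq_zero a (mem_insert_self i J) fun K hK hsub => hD (i, K) hK rfl ?_)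
  exact (insert_subset_insert_iff hiJ).1 hsub

open scoped Classical in
lemma sum_filter_fst_minimalFDH (i : V) (w : Finset V → ℝ) :
    ∑ p ∈ minimalFDH a u with p.1 = i, w p.2
      = ∑ K with Maximal (IsInteraction a u i) K, w K := by
  refine sum_nbij' Prod.snd (Prod.mk i) ?_ ?_ ?_ ?_ fun _ _ => rfl
  · rintro ⟨j, K⟩ hp
    obtain ⟨hmem, rfl⟩ := mem_filter.1 hp
    simpa using (mem_minimalFDH a u).1 hmem
  · intro K hK
    simpa [mem_minimalFDH] using hK
  · rintro ⟨j, K⟩ hp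
    obtain ⟨-, rfl⟩ := mem_filter.1 hp
    rfl
  · exact fun _ _ => rfl

open scoped Classical in
lemma gameSep_minimalFDH : GameSep u (minimalFDH a u) := by
  intro i
  set P := (univ.erase i).powerset
  set Q := P.filter (fun J => anova a (u i) (insert i J) ≠ 0)
  have hcover : ∀ J ∈ Q, ∃ K, Maximal (IsInteraction a u i) K ∧ J ⊆ K := by
    intro J hJ
    obtain ⟨hJP, hne⟩ := mem_filter.1 hJ
    obtain ⟨K, hJK, hK⟩ := Finite.exists_le_maximal (p := IsInteraction a u i)
      ⟨fun h => by simpa using mem_powerset.1 hJP h, hne⟩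
    exact ⟨K, hK, hJK⟩
  choose! c hcmax hcsub using hcover
  refine ⟨fun K x => ∑ J ∈ Q with c J = K, anova a (u i) (insert i J) x,
    fun x => ∑ S ∈ P, anova a (u i) S x, ?_, ?_, fun x => ?_⟩
  · intro K _ x y hxy
    refine sum_congr rfl fun J hJ => dependsOn_anova a _ _ fun j hj => hxy j ?_
    obtain ⟨hJne, rfl⟩ := mem_filter.1 hJ
    exact insert_subset_insert i (hcsub J hJne) hj
  · intro x y hxy
    refine sum_congr rfl fun S hS => dependsOn_anova a _ _ fun j hj => hxy j ?_
    exact (mem_erase.1 (mem_powerset.1 hS hj)).1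
  · beta_reduce
    rw [sum_filter_fst_minimalFDH a u i fun K => ∑ J ∈ Q with c J = K, anova a (u i) (insert i J) x,
      sum_fiberwise_of_maps_to fun J hJ => by simpa using hcmax J hJ,
      sum_filter_of_ne fun J _ hx h => hx (congrFun h x)]
    exact eq_sum_anova_insert_add_sum_anova a (u i) i x

end MinimalFDH

theorem exists_unique_minimal_FDH_general {V : Type*} [Fintype V] [DecidableEq V]
    {A : V → Type*} [∀ i, Nonempty (A i)]
    (u : V → (∀ i, A i) → ℝ) :
    ∃! D : Finset (V × Finset V),
      IsSimpleF D ∧ GameSep u D ∧ ∀ D' : Finset (V × Finset V), GameSep u D' → SubF D D' := by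
  obtain ⟨a⟩ : Nonempty (∀ i, A i) := inferInstance
  refine ⟨minimalFDH a u, ⟨isSimpleF_minimalFDH a u, gameSep_minimalFDH a u,
    fun D hD => subF_minimalFDH a u hD⟩, ?_⟩
  rintro D ⟨hsimple, hsep, hmin⟩
  have hle : SubF D (minimalFDH a u) := hmin _ (gameSep_minimalFDH a u)
  have hge : SubF (minimalFDH a u) D := subF_minimalFDH a u hsep
  exact (hsimple.subset_of_subF hle hge).antisymm
    ((isSimpleF_minimalFDH a u).subset_of_subF hge hle)

/-- Every finite game admits a unique minimal FDH-graph: a simple FDH-graph w.r.t. which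
the game is separable and which is a sub-FDH-graph of every FDH-graph w.r.t. which the
game is separable. -/
theorem exists_unique_minimal_FDH {V : Type*} [Fintype V] [DecidableEq V]
    {A : V → Type*} [∀ i, Fintype (A i)] [∀ i, Nonempty (A i)]
    (u : V → (∀ i, A i) → ℝ) :
    ∃! D : Finset (V × Finset V),
      IsSimpleF D ∧ GameSep u D ∧ ∀ D' : Finset (V × Finset V), GameSep u D' → SubF D D' :=
  exists_unique_minimal_FDH_general u
end

section
/- For every game u, the minimal graph G_u (the smallest directed graph with respect to which u is graphical) equals G^{F_u}, the directed graph induced by the minimal FDH-graph F_u of u. -/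
/-- A game is graphical w.r.t. the directed graph with edge set `E` if each utility
decomposes as `u i x = v_i(x_i, x_{N_i}) + n_i(x_{-i})`, with `N_i` the out-neighborhood
of `i`. -/
def Graphical {V : Type*} [DecidableEq V] {A : V → Type*}
    (u : V → (∀ i, A i) → ℝ) (E : Finset (V × V)) : Prop :=
  ∀ i : V, ∃ v n : (∀ j, A j) → ℝ,
    (∀ x y : ∀ j, A j,
      (∀ j ∈ insert i ((E.filter (fun p => p.1 = i)).image Prod.snd), x j = y j) →
        v x = v y) ∧
    (∀ x y : ∀ j, A j, (∀ j, j ≠ i → x j = y j) → n x = n y) ∧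
    ∀ x, u i x = v x + n x

/-!
An `F`-separable game is graphical on `G^F`, and a `G`-graphical game is separable on `F^G`,
the FDH-graph with one hyperlink `(i, N_i)` per player. Minimality of `G_u` then gives
`G_u ⊆ G^{F_u}`, and minimality of `F_u` gives `F_u ⪯ F^{G_u}`, whence `G^{F_u} ⊆ G_u`.
-/

namespace FDH

variable {V : Type*} [DecidableEq V]

def outNbhd (E : Finset (V × V)) (i : V) : Finset V :=
  (E.filter (fun p => p.1 = i)).image Prod.snd

theorem mem_outNbhd {E : Finset (V × V)} {i j : V} : j ∈ outNbhd E i ↔ (i, j) ∈ E := by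
  simp [outNbhd]

/-- The paper's `G^F`. -/
def graphOf (F : Finset (V × Finset V)) : Finset (V × V) :=
  F.biUnion fun p => p.2.image (Prod.mk p.1)

theorem mem_graphOf {F : Finset (V × Finset V)} {i j : V} :
    (i, j) ∈ graphOf F ↔ ∃ p ∈ F, p.1 = i ∧ j ∈ p.2 := by
  simp only [graphOf, Finset.mem_biUnion, Finset.mem_image, Prod.mk.injEq]
  constructor
  · rintro ⟨p, hp, j, hj, rfl, rfl⟩
    exact ⟨p, hp, rfl, hj⟩
  · rintro ⟨p, hp, rfl, hj⟩
    exact ⟨p, hp, j, hj, rfl, rfl⟩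

/-- The paper's `F^G`. -/
def fdhOf [Fintype V] (E : Finset (V × V)) : Finset (V × Finset V) :=
  Finset.univ.image fun k => (k, outNbhd E k)

theorem mem_fdhOf [Fintype V] {E : Finset (V × V)} {p : V × Finset V} :
    p ∈ fdhOf E ↔ p.2 = outNbhd E p.1 := by
  constructor
  · intro h
    obtain ⟨k, -, rfl⟩ := Finset.mem_image.mp h
    rfl
  · intro h
    exact Finset.mem_image.mpr ⟨p.1, Finset.mem_univ _, by rw [← h]⟩

theorem filter_fdhOf [Fintype V] (E : Finset (V × V)) (i : V) :
    (fdhOf E).filter (fun p => p.1 = i) = {(i, outNbhd E i)} := by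
  ext ⟨k, J⟩
  simp only [Finset.mem_filter, mem_fdhOf, Finset.mem_singleton, Prod.mk.injEq]
  constructor
  · rintro ⟨rfl, rfl⟩
    exact ⟨rfl, rfl⟩
  · rintro ⟨rfl, rfl⟩
    exact ⟨rfl, rfl⟩

theorem graphOf_subset_of_subF_fdhOf [Fintype V] {F : Finset (V × Finset V)}
    {E : Finset (V × V)} (h : SubF F (fdhOf E)) : graphOf F ⊆ E := by
  rintro ⟨i, j⟩ hij
  obtain ⟨p, hp, rfl, hj⟩ := mem_graphOf.mp hij
  obtain ⟨q, hq, hq1, hpq⟩ := h p hp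
  rw [← mem_outNbhd, ← hq1, ← mem_fdhOf.mp hq]
  exact hpq hj

variable {A : V → Type*} {u : V → (∀ i, A i) → ℝ}

theorem _root_.GameSep.graphical_graphOf {F : Finset (V × Finset V)} (hs : GameSep u F) :
    Graphical u (graphOf F) := by
  intro i
  obtain ⟨v, n, hv, hn, hu⟩ := hs i
  refine ⟨fun x => ∑ p ∈ F.filter (fun p => p.1 = i), v p.2 x, n, ?_, hn, hu⟩
  intro x y hxy
  refine Finset.sum_congr rfl fun p hp => ?_
  obtain ⟨hpF, rfl⟩ := Finset.mem_filter.mp hp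
  refine hv p.2 hpF x y fun j hj => hxy j ?_
  rcases Finset.mem_insert.mp hj with rfl | hj
  · exact Finset.mem_insert_self _ _
  · exact Finset.mem_insert_of_mem (mem_outNbhd.mpr (mem_graphOf.mpr ⟨p, hpF, rfl, hj⟩))

theorem _root_.Graphical.gameSep_fdhOf [Fintype V] {E : Finset (V × V)} (hg : Graphical u E) :
    GameSep u (fdhOf E) := by
  intro i
  obtain ⟨v, n, hv, hn, hu⟩ := hg i
  refine ⟨fun _ => v, n, ?_, hn, fun x => ?_⟩
  · intro J hJ
    rw [show J = outNbhd E i from mem_fdhOf.mp hJ]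
    exact hv
  · rw [filter_fdhOf, Finset.sum_singleton, hu x]

end FDH

theorem minimal_graph_eq_graph_of_minimal_FDH_general {V : Type*} [Fintype V] [DecidableEq V]
    {A : V → Type*}
    (u : V → (∀ i, A i) → ℝ)
    (Eu : Finset (V × V)) (Fu : Finset (V × Finset V))
    (hg : Graphical u Eu) (hgmin : ∀ E : Finset (V × V), Graphical u E → Eu ⊆ E)
    (hs : GameSep u Fu)
    (hsmin : ∀ D : Finset (V × Finset V), GameSep u D → SubF Fu D) :
    ∀ i j : V, (i, j) ∈ Eu ↔ ∃ p ∈ Fu, p.1 = i ∧ j ∈ p.2 := by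
  have hEu : Eu = FDH.graphOf Fu :=
    (hgmin _ hs.graphical_graphOf).antisymm
      (FDH.graphOf_subset_of_subF_fdhOf (hsmin _ hg.gameSep_fdhOf))
  intro i j
  rw [hEu, FDH.mem_graphOf]

/-- The minimal graph `G_u` of a game equals `G^{F_u}`, the directed graph induced by the
minimal FDH-graph `F_u` of the game: `(i,j)` is an edge of `G_u` iff `j` lies in the head
set of some hyperlink of `F_u` with tail `i`. -/
theorem minimal_graph_eq_graph_of_minimal_FDH {V : Type*} [Fintype V] [DecidableEq V]
    {A : V → Type*} [∀ i, Nonempty (A i)]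
    (u : V → (∀ i, A i) → ℝ)
    (Eu : Finset (V × V)) (Fu : Finset (V × Finset V))
    (hg : Graphical u Eu) (hgmin : ∀ E : Finset (V × V), Graphical u E → Eu ⊆ E)
    (hsimple : IsSimpleF Fu) (hs : GameSep u Fu)
    (hsmin : ∀ D : Finset (V × Finset V), GameSep u D → SubF Fu D) :
    ∀ i j : V, (i, j) ∈ Eu ↔ ∃ p ∈ Fu, p.1 = i ∧ j ∈ p.2 :=
  minimal_graph_eq_graph_of_minimal_FDH_general u Eu Fu hg hgmin hs hsmin
end

section
/- A potential game u with potential φ is graphical with respect to an undirected graph G if and only if φ is separable with respect to the clique hypergraph of G (the hypergraph whose hyperlinks are the maximal cliques of G). -/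
def IsPotential {V : Type*} {A : V → Type*}
    (u : V → (∀ i, A i) → ℝ) (φ : (∀ i, A i) → ℝ) : Prop :=
  ∀ (i : V) (x y : ∀ j, A j), (∀ j, j ≠ i → x j = y j) → u i x - u i y = φ x - φ y

/-- `C` is a clique of the (undirected) graph with edge set `E`. -/
def IsClique' {V : Type*} (E : Finset (V × V)) (C : Finset V) : Prop :=
  ∀ i ∈ C, ∀ j ∈ C, i ≠ j → (i, j) ∈ E

/-- `C` is a maximal clique of the graph with edge set `E`. -/
def IsMaxClique {V : Type*} (E : Finset (V × V)) (C : Finset V) : Prop :=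
  IsClique' E C ∧ ∀ C' : Finset V, IsClique' E C' → C ⊆ C' → C = C'

open Finset Function

section AlternatingSums

variable {ι R : Type*} [DecidableEq ι] [CommRing R]

theorem sum_powerset_neg_one_pow_mul_sum_powerset (f : Finset ι → R) (s : Finset ι) :
    ∑ S ∈ s.powerset, (-1) ^ S.card * ∑ T ∈ S.powerset, (-1) ^ T.card * f T = f s := by
  induction s using Finset.induction_on generalizing f with
  | empty => simp
  | @insert a s ha ih =>
    rw [sum_powerset_insert ha, ← sum_add_distrib, ← ih (fun T => f (insert a T))]
    refine sum_congr rfl fun S hS => ?_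
    have haS : a ∉ S := fun h => ha (mem_powerset.1 hS h)
    have hcard : ∀ T ∈ S.powerset, (-1 : R) ^ (insert a T).card * f (insert a T)
        = -((-1) ^ T.card * f (insert a T)) := fun T hT => by
      rw [card_insert_of_notMem fun h => haS (mem_powerset.1 hT h)]
      ring
    rw [sum_powerset_insert haS, card_insert_of_notMem haS, sum_congr rfl hcard,
      sum_neg_distrib, pow_succ]
    ring

theorem sum_powerset_neg_one_pow_mul_of_mem (f : Finset ι → R) {s : Finset ι} {i : ι}
    (hi : i ∈ s) :
    ∑ T ∈ s.powerset, (-1) ^ T.card * f T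
      = -∑ T ∈ (s.erase i).powerset, (-1) ^ T.card * (f (insert i T) - f T) := by
  conv_lhs => rw [← insert_erase hi]
  rw [sum_powerset_insert (notMem_erase i s), ← sum_add_distrib, ← sum_neg_distrib]
  refine sum_congr rfl fun T hT => ?_
  rw [card_insert_of_notMem fun h => notMem_erase i s (mem_powerset.1 hT h)]
  ring

theorem sum_powerset_neg_one_pow_mul_eq_zero (f : Finset ι → R) {s : Finset ι} {i j : ι}
    (hi : i ∈ s) (hj : j ∈ s) (hij : i ≠ j)
    (hf : ∀ T, i ∉ T → j ∉ T →
      f (insert i (insert j T)) - f (insert j T) = f (insert i T) - f T) :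
    ∑ T ∈ s.powerset, (-1) ^ T.card * f T = 0 := by
  rw [sum_powerset_neg_one_pow_mul_of_mem f hi,
    sum_powerset_neg_one_pow_mul_of_mem _ (mem_erase.2 ⟨hij.symm, hj⟩), neg_neg]
  refine sum_eq_zero fun T hT => ?_
  have hjT : j ∉ T := fun h => notMem_erase j _ (mem_powerset.1 hT h)
  have hiT : i ∉ T := fun h => notMem_erase i s (mem_of_mem_erase (mem_powerset.1 hT h))
  rw [hf T hiT hjT, sub_self, mul_zero]

end AlternatingSums

theorem exists_isMaxClique_superset {V : Type*} [Finite V] (E : Finset (V × V)) {C : Finset V}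
    (hC : IsClique' E C) : ∃ D, IsMaxClique E D ∧ C ⊆ D := by
  obtain ⟨D, hCD, hD, hmax⟩ := Finite.exists_le_maximal (p := IsClique' E) hC
  exact ⟨D, ⟨hD, fun C' hC' hDC' => le_antisymm hDC' (hmax hC' hDC')⟩, hCD⟩

section Games

variable {V : Type*} [DecidableEq V] {A : V → Type*}

theorem mem_insert_image_snd_filter_fst {E : Finset (V × V)} {i j : V} :
    j ∈ insert i ((E.filter fun p => p.1 = i).image Prod.snd) ↔ j = i ∨ (i, j) ∈ E := by
  simp only [mem_insert, mem_image, mem_filter]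
  constructor
  · rintro (rfl | ⟨p, ⟨hp, rfl⟩, rfl⟩)
    exacts [Or.inl rfl, Or.inr hp]
  · rintro (rfl | h)
    exacts [Or.inl rfl, Or.inr ⟨(i, j), ⟨h, rfl⟩, rfl⟩]

/-- The canonical interaction potential of `φ` relative to the base point `a`, as in the
Hammersley–Clifford theorem. -/
def canonicalPotential (a : ∀ i, A i) (φ : (∀ i, A i) → ℝ) (S : Finset V) (x : ∀ i, A i) : ℝ :=
  (-1) ^ S.card * ∑ T ∈ S.powerset, (-1) ^ T.card * φ (T.piecewise x a)

theorem canonicalPotential_congr (a : ∀ i, A i) (φ : (∀ i, A i) → ℝ) {S : Finset V}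
    {x y : ∀ i, A i} (h : ∀ k ∈ S, x k = y k) :
    canonicalPotential a φ S x = canonicalPotential a φ S y := by
  unfold canonicalPotential
  congr 1
  refine sum_congr rfl fun T hT => ?_
  rw [T.piecewise_congr (fun k hk => h k (mem_powerset.1 hT hk)) fun _ _ => rfl]

theorem sum_canonicalPotential [Fintype V] (a : ∀ i, A i) (φ : (∀ i, A i) → ℝ)
    (x : ∀ i, A i) : ∑ S ∈ (univ : Finset V).powerset, canonicalPotential a φ S x = φ x := by
  unfold canonicalPotential
  simpa only [piecewise_univ] using
    sum_powerset_neg_one_pow_mul_sum_powerset (fun T => φ (T.piecewise x a)) (univ : Finset V)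

theorem canonicalPotential_eq_zero (a : ∀ i, A i) {φ : (∀ i, A i) → ℝ} {i j : V} (hij : i ≠ j)
    (hφ : ∀ z b c, φ (update (update z j c) i b) - φ (update z j c) = φ (update z i b) - φ z)
    {S : Finset V} (hi : i ∈ S) (hj : j ∈ S) (x : ∀ k, A k) :
    canonicalPotential a φ S x = 0 := by
  refine mul_eq_zero_of_right _ (sum_powerset_neg_one_pow_mul_eq_zero _ hi hj hij ?_)
  intro T _ _
  simp only [piecewise_insert]
  exact hφ _ _ _

theorem Graphical.potential_increment_update_of_not_adj {u : V → (∀ i, A i) → ℝ}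
    {φ : (∀ i, A i) → ℝ} {E : Finset (V × V)} (hg : Graphical u E) (hpot : IsPotential u φ)
    {i j : V} (hij : i ≠ j) (hE : (i, j) ∉ E) (z : ∀ k, A k) (b : A i) (c : A j) :
    φ (update (update z j c) i b) - φ (update z j c) = φ (update z i b) - φ z := by
  obtain ⟨v, n, hv, hn, huv⟩ := hg i
  have increment : ∀ w : ∀ k, A k, φ (update w i b) - φ w = v (update w i b) - v w := by
    intro w
    have hne : ∀ k, k ≠ i → update w i b k = w k := fun k hk => update_of_ne hk _ _
    rw [← hpot i _ _ hne, huv, huv, hn _ _ hne]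
    ring
  have hvj : ∀ w : ∀ k, A k, v (update w j c) = v w := by
    refine fun w => hv _ _ fun k hk => update_of_ne ?_ _ _
    rintro rfl
    rcases mem_insert_image_snd_filter_fst.1 hk with h | h
    exacts [hij h.symm, hE h]
  rw [increment, increment, update_comm hij.symm, hvj, hvj]

theorem SepFun.of_sum {φ : (∀ i, A i) → ℝ} {L : Finset (Finset V)} (ψ : Finset V → (∀ i, A i) → ℝ)
    (s : Finset (Finset V)) (hψ : ∀ S ∈ s, ∀ x y : ∀ i, A i, (∀ k ∈ S, x k = y k) → ψ S x = ψ S y)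
    (hs : ∀ S ∈ s, ∃ J ∈ L, S ⊆ J) (hφ : ∀ x, φ x = ∑ S ∈ s, ψ S x) : SepFun φ L := by
  choose! m hmL hm using hs
  refine ⟨fun J x => ∑ S ∈ s with m S = J, ψ S x, fun J _ x y hxy => ?_, fun x => ?_⟩
  · refine sum_congr rfl fun S hS => ?_
    obtain ⟨hSs, rfl⟩ := mem_filter.1 hS
    exact hψ S hSs x y fun k hk => hxy k (hm S hSs hk)
  · rw [hφ, sum_fiberwise_of_maps_to hmL]

theorem sepFun_of_graphical [Fintype V] [∀ i, Nonempty (A i)] {u : V → (∀ i, A i) → ℝ}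
    {φ : (∀ i, A i) → ℝ} {E : Finset (V × V)} {L : Finset (Finset V)} (hpot : IsPotential u φ)
    (hg : Graphical u E) (hL : ∀ C, IsClique' E C → ∃ D ∈ L, C ⊆ D) : SepFun φ L := by
  classical
  let a : ∀ i, A i := fun i => Classical.arbitrary (A i)
  refine SepFun.of_sum (canonicalPotential a φ) ((univ : Finset (Finset V)).filter (IsClique' E))
    (fun S _ _ _ => canonicalPotential_congr a φ) (fun S hS => hL S (mem_filter.1 hS).2)
    fun x => ?_
  rw [sum_filter_of_ne, ← powerset_univ, sum_canonicalPotential]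
  intro S _ hne
  by_contra hS
  obtain ⟨i, hi, j, hj, hij, hE⟩ : ∃ i ∈ S, ∃ j ∈ S, i ≠ j ∧ (i, j) ∉ E := by
    simpa [IsClique'] using hS
  exact hne (canonicalPotential_eq_zero a hij
    (hg.potential_increment_update_of_not_adj hpot hij hE) hi hj x)

theorem graphical_of_sepFun {u : V → (∀ i, A i) → ℝ} {φ : (∀ i, A i) → ℝ}
    {E : Finset (V × V)} {L : Finset (Finset V)} (hpot : IsPotential u φ)
    (hL : ∀ C ∈ L, IsClique' E C) (hsep : SepFun φ L) : Graphical u E := by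
  obtain ⟨g, hg, hsum⟩ := hsep
  intro i
  refine ⟨fun x => ∑ C ∈ L with i ∈ C, g C x,
    fun x => u i x - φ x + ∑ C ∈ L with i ∉ C, g C x, fun x y hxy => ?_, fun x y hxy => ?_,
    fun x => ?_⟩
  · refine sum_congr rfl fun C hC => ?_
    obtain ⟨hCL, hiC⟩ := mem_filter.1 hC
    refine hg C hCL x y fun k hk => hxy k (mem_insert_image_snd_filter_fst.2 ?_)
    rcases eq_or_ne k i with hki | hki
    exacts [Or.inl hki, Or.inr (hL C hCL i hiC k hk hki.symm)]
  · have hdiff := hpot i x y hxy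
    have hrest : ∑ C ∈ L with i ∉ C, g C x = ∑ C ∈ L with i ∉ C, g C y :=
      sum_congr rfl fun C hC => hg C (mem_filter.1 hC).1 x y fun k hk =>
        hxy k fun hki => (mem_filter.1 hC).2 (hki ▸ hk)
    linarith
  · linarith [hsum x, sum_filter_add_sum_filter_not L (fun C => i ∈ C) (fun C => g C x)]

end Games

theorem graphical_iff_potential_clique_separable_general {V : Type*} [Fintype V] [DecidableEq V]
    {A : V → Type*} [∀ i, Nonempty (A i)]
    (E : Finset (V × V))
    (u : V → (∀ i, A i) → ℝ) (φ : (∀ i, A i) → ℝ)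
    (hpot : IsPotential u φ)
    (HCl : Finset (Finset V)) (hHCl : ∀ C : Finset V, C ∈ HCl ↔ IsMaxClique E C) :
    Graphical u E ↔ SepFun φ HCl := by
  refine ⟨fun hg => sepFun_of_graphical hpot hg fun C hC => ?_,
    graphical_of_sepFun hpot fun C hC => ((hHCl C).1 hC).1⟩
  obtain ⟨D, hD, hCD⟩ := exists_isMaxClique_superset E hC
  exact ⟨D, (hHCl D).2 hD, hCD⟩

/-- A potential game `u` with potential `φ` is graphical w.r.t. an undirected graph `G`
iff `φ` is separable w.r.t. the hypergraph of maximal cliques of `G`. -/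
theorem graphical_iff_potential_clique_separable {V : Type*} [Fintype V] [DecidableEq V]
    {A : V → Type*} [∀ i, Fintype (A i)] [∀ i, Nonempty (A i)]
    (E : Finset (V × V))
    (hsym : ∀ i j : V, (i, j) ∈ E → (j, i) ∈ E) (hirr : ∀ i : V, (i, i) ∉ E)
    (u : V → (∀ i, A i) → ℝ) (φ : (∀ i, A i) → ℝ)
    (hpot : IsPotential u φ)
    (HCl : Finset (Finset V)) (hHCl : ∀ C : Finset V, C ∈ HCl ↔ IsMaxClique E C) :
    Graphical u E ↔ SepFun φ HCl :=
  graphical_iff_potential_clique_separable_general E u φ hpot HCl hHCl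
end

section
/- If a finite game u is F-separable with respect to an FDH-graph F, then both its potential component u_pot and its harmonic component u_har (from the potential-harmonic-nonstrategic decomposition) are separable with respect to the underlying undirected FDH-graph F^↔, whose hyperlinks are all (i, J) such that {i} ∪ J = {h} ∪ K for some hyperlink (h, K) of F. -/
/-- Non-strategic game: each player's utility does not depend on her own action. -/
def Nonstrategic {V : Type*} {A : V → Type*} (n : V → (∀ i, A i) → ℝ) : Prop :=
  ∀ (i : V) (x y : ∀ j, A j), (∀ j, j ≠ i → x j = y j) → n i x = n i y

/-- Harmonic game: `Σ_i Σ_{y ∼_i x} (u_i(x) − u_i(y)) = 0` for every profile `x`. -/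
def Harmonic {V : Type*} [Fintype V] [DecidableEq V] {A : V → Type*} [∀ i, Fintype (A i)]
    (u : V → (∀ i, A i) → ℝ) : Prop :=
  ∀ x : ∀ j, A j, ∑ i : V, ∑ a : A i, (u i x - u i (Function.update x i a)) = 0

/-- The underlying undirected FDH-graph `F^↔` of `F`: all hyperlinks `(i, J)` with
`{i} ∪ J = {h} ∪ K` for some hyperlink `(h, K)` of `F`. -/
def undirF {V : Type*} [Fintype V] [DecidableEq V] (D : Finset (V × Finset V)) :
    Finset (V × Finset V) :=
  Finset.univ.filter (fun p : V × Finset V => ∃ q ∈ D, insert p.1 p.2 = insert q.1 q.2)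


/-!
Let `L_i f x = ∑ a, (f x - f (update x i a))` and let `L = ∑ i, L_i` be the Laplacian of the
profile graph. For a potential `φ` of `u_pot`, `L φ = ∑ i, L_i (u i)`, because the harmonic component contributes zero
and the non-strategic one nothing. `F`-separability writes the right-hand side as a sum of
zero-mean functions, each depending only on a hyperedge `{i} ∪ J`. By the maximum principle the
kernel of `L` consists of constants, so `L` is invertible on zero-mean functions depending on a
fixed set of coordinates; hence `φ` is, up to a constant, a sum of functions of single hyperedges.
Such a potential game is `F^↔`-separable, and then so is `u_har = u - u_pot - n`.
-/

namespace FiniteGame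

open Finset Function

section LaplacianAt

variable {V : Type*} [DecidableEq V] {A : V → Type*} [∀ i, Fintype (A i)]

noncomputable def laplacianAt (i : V) : ((∀ j, A j) → ℝ) →ₗ[ℝ] ((∀ j, A j) → ℝ) :=
  ∑ a : A i, (LinearMap.id - LinearMap.funLeft ℝ ℝ (fun x => update x i a))

@[simp] lemma laplacianAt_apply (i : V) (f : (∀ j, A j) → ℝ) (x : ∀ j, A j) :
    laplacianAt i f x = ∑ a : A i, (f x - f (update x i a)) := by
  simp [laplacianAt, Finset.sum_apply, LinearMap.funLeft_apply]

lemma sum_comp_update (i : V) [Fintype (∀ j, A j)] (f : (∀ j, A j) → ℝ) :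
    ∑ x : ∀ j, A j, ∑ a : A i, f (update x i a) = ∑ x : ∀ j, A j, ∑ _a : A i, f x := by
  have hswap : Involutive fun p : (∀ j, A j) × A i => (update p.1 i p.2, p.1 i) := by
    rintro ⟨x, a⟩
    simp
  simp only [← Fintype.sum_prod_type']
  exact Equiv.sum_comp hswap.toPerm fun p => f p.1

lemma sum_laplacianAt_apply (i : V) [Fintype (∀ j, A j)] (f : (∀ j, A j) → ℝ) :
    ∑ x, laplacianAt i f x = 0 := by
  simp only [laplacianAt_apply, sum_sub_distrib, sum_comp_update, sub_self]

lemma dependsOn_laplacianAt {f : (∀ j, A j) → ℝ} {S : Set V} (hf : DependsOn f S) (i : V) :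
    DependsOn (laplacianAt i f) S := by
  intro x y hxy
  simp only [laplacianAt_apply]
  by_cases hi : i ∈ S
  · refine sum_congr rfl fun a _ => ?_
    have hupd : ∀ j ∈ S, update x i a j = update y i a j := fun j hj => by
      rcases eq_or_ne j i with rfl | hji
      · simp
      · simp [update_of_ne hji, hxy j hj]
    rw [hf hxy, hf hupd]
  · have hupd : ∀ z : ∀ j, A j, ∀ a : A i, f (update z i a) = f z := fun z a =>
      hf fun j hj => update_of_ne (ne_of_mem_of_not_mem hj hi) a z
    simp [hupd]

lemma laplacianAt_eq_zero {i : V} {f : (∀ j, A j) → ℝ} (hf : DependsOn f {i}ᶜ) :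
    laplacianAt i f = 0 := by
  funext x
  simp [hf fun j (hj : j ≠ i) => update_of_ne hj _ x]

lemma laplacianAt_eq_of_sub_eq {i : V} {f g : (∀ j, A j) → ℝ}
    (h : ∀ x y : ∀ j, A j, (∀ j, j ≠ i → x j = y j) → f x - f y = g x - g y) :
    laplacianAt i f = laplacianAt i g := by
  funext x
  simp only [laplacianAt_apply]
  exact sum_congr rfl fun a _ => h _ _ fun j hj => (update_of_ne hj a x).symm

end LaplacianAt

lemma forall_of_forall_update {V : Type*} [Fintype V] [DecidableEq V] {A : V → Type*}
    {P : (∀ j, A j) → Prop} {z : ∀ j, A j} (hz : P z)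
    (hP : ∀ x (i : V) (a : A i), P x → P (update x i a)) (x : ∀ j, A j) : P x := by
  suffices ∀ s : Finset V, P fun j => if j ∈ s then x j else z j by simpa using this univ
  intro s
  induction s using Finset.induction_on with
  | empty => simpa using hz
  | @insert i s hi ih =>
    convert hP _ i (x i) ih using 1
    funext j
    rcases eq_or_ne j i with rfl | hji <;> simp [*]

section Laplacian

variable {V : Type*} [Fintype V] [DecidableEq V] {A : V → Type*} [∀ i, Fintype (A i)]

noncomputable def laplacian : ((∀ j, A j) → ℝ) →ₗ[ℝ] ((∀ j, A j) → ℝ) :=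
  ∑ i, laplacianAt i

lemma laplacian_apply (f : (∀ j, A j) → ℝ) (x : ∀ j, A j) :
    laplacian f x = ∑ i, laplacianAt i f x := by
  simp [laplacian, Finset.sum_apply]

lemma update_eq_of_isMaxOn_of_laplacian_eq_zero {f : (∀ j, A j) → ℝ} {x : ∀ j, A j}
    (hmax : IsMaxOn f Set.univ x) (hx : laplacian f x = 0) (i : V) (a : A i) :
    f (update x i a) = f x := by
  have hle : ∀ (j : V) (b : A j), 0 ≤ f x - f (update x j b) := fun j b =>
    sub_nonneg.mpr (hmax (Set.mem_univ _))
  simp only [laplacian_apply, laplacianAt_apply] at hx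
  have hi := (sum_eq_zero_iff_of_nonneg fun j _ => sum_nonneg fun b _ => hle j b).mp hx i
    (mem_univ i)
  have := (sum_eq_zero_iff_of_nonneg fun b _ => hle i b).mp hi a (mem_univ a)
  linarith

lemma eq_of_laplacian_eq_zero {f : (∀ j, A j) → ℝ} (hf : laplacian f = 0) (x y : ∀ j, A j) :
    f x = f y := by
  have : Nonempty (∀ j, A j) := ⟨x⟩
  obtain ⟨z, hz⟩ := Finite.exists_max f
  have hmax : ∀ w, f w = f z := forall_of_forall_update rfl fun w i a hw =>
    hw ▸ update_eq_of_isMaxOn_of_laplacian_eq_zero (fun v _ => hw ▸ hz v)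
      (congrFun hf w) i a
  rw [hmax x, hmax y]

lemma eq_zero_of_laplacian_eq_zero {f : (∀ j, A j) → ℝ} (hf : laplacian f = 0)
    (hmean : ∑ x, f x = 0) : f = 0 := by
  funext x
  have hconst : ∑ y, f y = Fintype.card (∀ j, A j) • f x :=
    (sum_congr rfl fun y _ => eq_of_laplacian_eq_zero hf y x).trans (sum_const _)
  have hcard : (Fintype.card (∀ j, A j) : ℝ) ≠ 0 := by
    have : Nonempty (∀ j, A j) := ⟨x⟩
    positivity
  rw [hmean, nsmul_eq_mul, zero_eq_mul] at hconst
  exact hconst.resolve_left hcard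

variable (A) in
def dependsOnZeroMean (S : Set V) : Submodule ℝ ((∀ j, A j) → ℝ) where
  carrier := {f | DependsOn f S ∧ ∑ x, f x = 0}
  add_mem' := by
    rintro f g ⟨hf, hf₀⟩ ⟨hg, hg₀⟩
    exact ⟨fun x y h => by simp [hf h, hg h], by simp [sum_add_distrib, hf₀, hg₀]⟩
  zero_mem' := ⟨fun _ _ _ => rfl, by simp⟩
  smul_mem' := by
    rintro c f ⟨hf, hf₀⟩
    exact ⟨fun x y h => by simp [hf h], by simp [← mul_sum, hf₀]⟩

lemma mem_dependsOnZeroMean {S : Set V} {f : (∀ j, A j) → ℝ} :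
    f ∈ dependsOnZeroMean A S ↔ DependsOn f S ∧ ∑ x, f x = 0 := Iff.rfl

lemma laplacianAt_mem_dependsOnZeroMean {S : Set V} {f : (∀ j, A j) → ℝ} (hf : DependsOn f S)
    (i : V) : laplacianAt i f ∈ dependsOnZeroMean A S :=
  ⟨dependsOn_laplacianAt hf i, sum_laplacianAt_apply i f⟩

lemma laplacian_mem_dependsOnZeroMean {S : Set V} {f : (∀ j, A j) → ℝ}
    (hf : f ∈ dependsOnZeroMean A S) : laplacian f ∈ dependsOnZeroMean A S := by
  rw [laplacian, LinearMap.sum_apply]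
  exact Submodule.sum_mem _ fun i _ =>
    laplacianAt_mem_dependsOnZeroMean (mem_dependsOnZeroMean.mp hf).1 i

lemma exists_laplacian_eq {S : Set V} {g : (∀ j, A j) → ℝ} (hg : g ∈ dependsOnZeroMean A S) :
    ∃ ψ ∈ dependsOnZeroMean A S, laplacian ψ = g := by
  let L := laplacian.restrict fun f (hf : f ∈ dependsOnZeroMean A S) =>
    laplacian_mem_dependsOnZeroMean hf
  have hinj : Injective L := by
    rw [← LinearMap.ker_eq_bot, Submodule.eq_bot_iff]
    rintro ⟨f, hf⟩ hLf
    exact Subtype.ext (eq_zero_of_laplacian_eq_zero (congrArg Subtype.val hLf) hf.2)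
  obtain ⟨⟨ψ, hψ⟩, hLψ⟩ := LinearMap.injective_iff_surjective.mp hinj ⟨g, hg⟩
  exact ⟨ψ, hψ, congrArg Subtype.val hLψ⟩

lemma exists_eq_sum_add_const_of_laplacian_eq_sum {ι : Type*} {K : Finset ι} {S : ι → Set V}
    {φ : (∀ j, A j) → ℝ} {g : ι → (∀ j, A j) → ℝ} (hg : ∀ k ∈ K, g k ∈ dependsOnZeroMean A (S k))
    (hφ : laplacian φ = ∑ k ∈ K, g k) :
    ∃ ψ : ι → (∀ j, A j) → ℝ, (∀ k ∈ K, DependsOn (ψ k) (S k)) ∧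
      ∃ c : ℝ, ∀ x, φ x = ∑ k ∈ K, ψ k x + c := by
  choose! ψ hψ hLψ using fun k hk => exists_laplacian_eq (hg k hk)
  refine ⟨ψ, fun k hk => (hψ k hk).1, ?_⟩
  have hker : laplacian (φ - ∑ k ∈ K, ψ k) = 0 := by
    rw [map_sub, map_sum, hφ, sum_congr rfl hLψ, sub_self]
  rcases isEmpty_or_nonempty (∀ j, A j) with hX | ⟨⟨x₀⟩⟩
  · exact ⟨0, fun x => isEmptyElim x⟩
  refine ⟨φ x₀ - ∑ k ∈ K, ψ k x₀, fun x => ?_⟩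
  have := eq_of_laplacian_eq_zero hker x x₀
  simp only [Pi.sub_apply, Finset.sum_apply] at this
  linarith

end Laplacian

end FiniteGame

open Finset FiniteGame

section Separability

variable {V : Type*} [DecidableEq V] {A : V → Type*}

lemma GameSep.sub {u w : V → (∀ i, A i) → ℝ} {D : Finset (V × Finset V)} (hu : GameSep u D)
    (hw : GameSep w D) : GameSep (u - w) D := by
  intro i
  obtain ⟨v, n, hv, hn, hvn⟩ := hu i
  obtain ⟨v', n', hv', hn', hvn'⟩ := hw i
  refine ⟨v - v', n - n', fun J hJ x y h => ?_, fun x y h => ?_, fun x => ?_⟩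
  · simp [hv J hJ x y h, hv' J hJ x y h]
  · simp [hn x y h, hn' x y h]
  · simp only [Pi.sub_apply, hvn x, hvn' x, sum_sub_distrib]
    ring

lemma GameSep.of_nonstrategic {n : V → (∀ i, A i) → ℝ} (hn : Nonstrategic n)
    (D : Finset (V × Finset V)) : GameSep n D :=
  fun i => ⟨0, n i, fun _ _ _ _ _ => rfl, hn i, fun x => by simp⟩

lemma GameSep.mono {u : V → (∀ i, A i) → ℝ} {D E : Finset (V × Finset V)} (hu : GameSep u D)
    (hDE : D ⊆ E) : GameSep u E := by
  intro i
  obtain ⟨v, n, hv, hn, hvn⟩ := hu i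
  refine ⟨fun J x => if (i, J) ∈ D then v J x else 0, n, fun J _ x y h => ?_, hn, fun x => ?_⟩
  · dsimp only
    split_ifs with hJ
    · exact hv J hJ x y h
    · rfl
  rw [hvn x, ← sum_subset (filter_subset_filter _ hDE)]
  · refine congrArg (· + n x) (sum_congr rfl fun p hp => ?_)
    obtain ⟨hpD, rfl⟩ := mem_filter.mp hp
    simp [hpD]
  · rintro p hp hpD
    obtain ⟨_, rfl⟩ := mem_filter.mp hp
    simp_all

variable [Fintype V]

/-- `hypergraph D` and `fdhGraph H` are the paper's `H^F` and `F^H`. -/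
def hypergraph (D : Finset (V × Finset V)) : Finset (Finset V) :=
  D.image fun q => insert q.1 q.2

def fdhGraph (H : Finset (Finset V)) : Finset (V × Finset V) :=
  univ.filter fun p => insert p.1 p.2 ∈ H

lemma undirF_eq_fdhGraph_hypergraph (D : Finset (V × Finset V)) :
    undirF D = fdhGraph (hypergraph D) := by
  ext p
  simp [undirF, fdhGraph, hypergraph, eq_comm]

lemma subset_undirF (D : Finset (V × Finset V)) : D ⊆ undirF D :=
  fun p hp => mem_filter.mpr ⟨mem_univ p, p, hp, rfl⟩

lemma sum_filter_fdhGraph {M : Type*} [AddCommMonoid M] (H : Finset (Finset V)) (i : V)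
    (f : Finset V → M) :
    ∑ p ∈ (fdhGraph H).filter (fun p => p.1 = i), (if i ∉ p.2 then f (insert i p.2) else 0) =
      ∑ h ∈ H.filter (i ∈ ·), f h := by
  rw [← sum_filter]
  refine sum_nbij' (fun p => insert i p.2) (fun h => (i, h.erase i)) ?_ ?_ ?_ ?_ ?_
  · rintro ⟨j, J⟩ hp
    obtain ⟨⟨hH, rfl⟩, -⟩ : (insert j J ∈ H ∧ j = i) ∧ i ∉ J := by simpa [fdhGraph] using hp
    simpa using hH
  · intro h hh
    simp_all [fdhGraph]
  · rintro ⟨j, J⟩ hp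
    simp_all
  · intro h hh
    simp_all
  · intro p hp
    rfl

lemma IsPotential.gameSep_fdhGraph {upot : V → (∀ i, A i) → ℝ} {φ : (∀ i, A i) → ℝ}
    (hpot : IsPotential upot φ) {H : Finset (Finset V)} {ψ : Finset V → (∀ i, A i) → ℝ}
    (hψ : ∀ h ∈ H, DependsOn (ψ h) h) {c : ℝ} (hφ : ∀ x, φ x = ∑ h ∈ H, ψ h x + c) :
    GameSep upot (fdhGraph H) := by
  intro i
  refine ⟨fun J x => if i ∉ J then ψ (insert i J) x else 0,
    fun x => upot i x - ∑ h ∈ H.filter (i ∈ ·), ψ h x, fun J hJ x y hxy => ?_,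
    fun x y hxy => ?_, fun x => ?_⟩
  · dsimp only
    split_ifs
    · rfl
    · exact hψ _ (mem_filter.mp hJ).2 hxy
  · have hout : ∀ h ∈ H.filter (i ∉ ·), ψ h x = ψ h y := fun h hh =>
      hψ h (mem_filter.mp hh).1 fun j hj => hxy j (ne_of_mem_of_not_mem hj (mem_filter.mp hh).2)
    have hdiff := hpot i x y hxy
    rw [hφ x, hφ y, ← sum_filter_add_sum_filter_not H (i ∈ ·),
      ← sum_filter_add_sum_filter_not H (i ∈ ·) (ψ · y), sum_congr rfl hout] at hdiff
    linarith
  · dsimp only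
    rw [sum_filter_fdhGraph H i (ψ · x)]
    ring

end Separability

section Decomposition

variable {V : Type*} [Fintype V] [DecidableEq V] {A : V → Type*} [∀ i, Fintype (A i)]

lemma GameSep.exists_laplacianAt_eq_sum {u : V → (∀ i, A i) → ℝ} {D : Finset (V × Finset V)}
    (hu : GameSep u D) :
    ∃ g : V × Finset V → (∀ i, A i) → ℝ,
      (∀ q ∈ D, g q ∈ dependsOnZeroMean A ↑(insert q.1 q.2)) ∧
      ∀ i, laplacianAt i (u i) = ∑ q ∈ D.filter (fun q => q.1 = i), g q := by
  choose v n hv hn hvn using hu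
  refine ⟨fun q => laplacianAt q.1 (v q.1 q.2), fun q hq =>
    laplacianAt_mem_dependsOnZeroMean (fun x y h => hv q.1 q.2 hq x y h) q.1, fun i => ?_⟩
  have hui : u i = ∑ p ∈ D.filter (fun p => p.1 = i), v i p.2 + n i :=
    funext fun x => by simp [hvn i x, Finset.sum_apply]
  rw [hui, map_add, map_sum, laplacianAt_eq_zero fun x y h => hn i x y h, add_zero]
  refine sum_congr rfl fun p hp => ?_
  obtain ⟨_, rfl⟩ := mem_filter.mp hp
  rfl

lemma IsPotential.laplacian_eq_sum_laplacianAt {u upot uhar n : V → (∀ i, A i) → ℝ}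
    {φ : (∀ i, A i) → ℝ} (hpot : IsPotential upot φ)
    (hdec : ∀ i x, u i x = upot i x + uhar i x + n i x) (hhar : Harmonic uhar)
    (hns : Nonstrategic n) : laplacian φ = ∑ i, laplacianAt i (u i) := by
  have hu : ∀ i, u i = upot i + uhar i + n i := fun i => funext (hdec i)
  have hpot' : ∀ i, laplacianAt i (upot i) = laplacianAt i φ := fun i =>
    laplacianAt_eq_of_sub_eq (hpot i)
  have hns' : ∀ i, laplacianAt i (n i) = 0 := fun i =>
    laplacianAt_eq_zero fun x y h => hns i x y h
  have hhar' : ∑ i, laplacianAt i (uhar i) = 0 :=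
    funext fun x => by simpa [Finset.sum_apply] using hhar x
  simp only [hu, map_add, hpot', hns', add_zero, sum_add_distrib, hhar', laplacian,
    LinearMap.sum_apply]

end Decomposition

theorem potential_harmonic_components_separable_general {V : Type*} [Fintype V] [DecidableEq V]
    {A : V → Type*} [∀ i, Fintype (A i)]
    (u upot uhar n : V → (∀ i, A i) → ℝ)
    (D : Finset (V × Finset V))
    (hsep : GameSep u D)
    (hdec : ∀ (i : V) (x : ∀ j, A j), u i x = upot i x + uhar i x + n i x)
    (hpot : ∃ φ : (∀ i, A i) → ℝ, IsPotential upot φ)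
    (hhar : Harmonic uhar)
    (hns : Nonstrategic n) :
    GameSep upot (undirF D) ∧ GameSep uhar (undirF D) := by
  obtain ⟨φ, hφ⟩ := hpot
  obtain ⟨g, hg, hgu⟩ := hsep.exists_laplacianAt_eq_sum
  have hLφ : laplacian φ =
      ∑ h ∈ hypergraph D, ∑ q ∈ D.filter (fun q => insert q.1 q.2 = h), g q := by
    rw [hφ.laplacian_eq_sum_laplacianAt hdec hhar hns, sum_fiberwise_of_maps_to
      fun q hq => mem_image_of_mem (fun q => insert q.1 q.2) hq, ← sum_fiberwise D Prod.fst g]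
    simp only [hgu]
  obtain ⟨ψ, hψ, c, hφψ⟩ := exists_eq_sum_add_const_of_laplacian_eq_sum (fun _ _ =>
    Submodule.sum_mem _ fun q hq => (mem_filter.mp hq).2 ▸ hg q (mem_filter.mp hq).1) hLφ
  have hupot : GameSep upot (undirF D) := by
    rw [undirF_eq_fdhGraph_hypergraph]
    exact hφ.gameSep_fdhGraph hψ hφψ
  have huhar : uhar = u - upot - n := funext fun i => funext fun x => by
    simp only [Pi.sub_apply, hdec i x]
    ring
  exact ⟨hupot, huhar ▸ ((hsep.mono (subset_undirF D)).sub hupot).sub (.of_nonstrategic hns _)⟩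

/-- If a finite game `u` is `F`-separable, then its potential and harmonic components
(from the potential/harmonic/non-strategic decomposition) are `F^↔`-separable. -/
theorem potential_harmonic_components_separable {V : Type*} [Fintype V] [DecidableEq V]
    {A : V → Type*} [∀ i, Fintype (A i)] [∀ i, Nonempty (A i)]
    (u upot uhar n : V → (∀ i, A i) → ℝ)
    (D : Finset (V × Finset V))
    (hsep : GameSep u D)
    (hdec : ∀ (i : V) (x : ∀ j, A j), u i x = upot i x + uhar i x + n i x)
    (hpot : ∃ φ : (∀ i, A i) → ℝ, IsPotential upot φ)
    (hhar : Harmonic uhar)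
    (hns : Nonstrategic n) :
    GameSep upot (undirF D) ∧ GameSep uhar (undirF D) :=
  potential_harmonic_components_separable_general u upot uhar n D hsep hdec hpot hhar hns
end
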